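/- arXiv:math/0101188 — 2 statements merged into one kernel-verified Lean document; each statement's English description precedes it below -/
import Mathlib

section
/- For real ν and x > 0, ρ_ν'(x) = (ν/x) ρ_ν(x) - (1/x) ρ_(ν+1)(x), where ρ_ν(x) = ∫₀^∞ t^(ν-1) e^(-t - x/t) dt. -/
open MeasureTheory Real Set

noncomputable def rho (ν x : ℝ) : ℝ :=
  ∫ t in Set.Ioi (0:ℝ), t ^ (ν - 1) * Real.exp (-t - x / t)

noncomputable def K (ν z : ℝ) : ℝ :=
  (1/2) * (z/2) ^ ν * ∫ t in Set.Ioi (0:ℝ), Real.exp (-t - z^2 / (4*t)) * t ^ (-ν - 1)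

/-!
Differentiating under the integral sign gives `ρ_ν' = -ρ_(ν-1)`, and the substitution
`t ↦ x / t` gives the reflection formula `ρ_ν(x) = x^ν ρ_(-ν)(x)`. Differentiating the reflected
form by the product rule and reflecting back yields the theorem. The integrals converge because
`e^(-x/t) ≤ n! (t/x)^n` tames every power of `t` at `0`.
-/

open scoped Nat

theorem Real.exp_neg_le_factorial_div_pow {y : ℝ} (hy : 0 < y) (n : ℕ) :
    exp (-y) ≤ n ! / y ^ n := by
  rw [exp_neg, ← one_div, div_le_div_iff₀ (exp_pos y) (by positivity), one_mul,
    ← div_le_iff₀' (by positivity)]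
  exact pow_div_factorial_le_exp y hy.le n

theorem continuousOn_rpow_mul_exp_neg_sub_div (s a : ℝ) :
    ContinuousOn (fun t : ℝ => t ^ s * exp (-t - a / t)) (Ioi 0) := by
  fun_prop (disch := intro t (ht : 0 < t); positivity)

theorem integrableOn_rpow_mul_exp_neg_sub_div (s : ℝ) {a : ℝ} (ha : 0 < a) :
    IntegrableOn (fun t : ℝ => t ^ s * exp (-t - a / t)) (Ioi 0) := by
  set n := ⌈-s⌉₊
  have hsn : 0 ≤ s + n := by linarith [Nat.le_ceil (-s)]
  have hGamma := (GammaIntegral_convergent (s := s + n + 1) (by linarith)).const_mul (n ! / a ^ n)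
  refine hGamma.mono'
    ((continuousOn_rpow_mul_exp_neg_sub_div s a).aestronglyMeasurable measurableSet_Ioi)
    ((ae_restrict_iff' measurableSet_Ioi).2 (.of_forall fun t (ht : 0 < t) => ?_))
  have hexp := exp_neg_le_factorial_div_pow (div_pos ha ht) n
  rw [norm_of_nonneg (by positivity), sub_eq_add_neg, exp_add, add_sub_cancel_right,
    rpow_add ht, rpow_natCast]
  calc t ^ s * (exp (-t) * exp (-(a / t)))
      ≤ t ^ s * (exp (-t) * (n ! / (a / t) ^ n)) := by gcongr
    _ = n ! / a ^ n * (exp (-t) * (t ^ s * t ^ n)) := by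
      rw [div_pow]; field_simp

theorem hasDerivAt_rpow_mul_exp_neg_sub_div {t : ℝ} (ht : 0 < t) (s y : ℝ) :
    HasDerivAt (fun y => t ^ s * exp (-t - y / t)) (-(t ^ (s - 1) * exp (-t - y / t))) y := by
  refine ((((hasDerivAt_id' y).div_const t).const_sub (-t)).exp.const_mul (t ^ s)).congr_deriv ?_
  rw [rpow_sub_one ht.ne']
  field_simp

theorem hasDerivAt_rho (ν : ℝ) {x : ℝ} (hx : 0 < x) :
    HasDerivAt (rho ν) (-rho (ν - 1) x) x := by
  have hball := Metric.ball_mem_nhds x (half_pos hx)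
  have hbound : ∀ᵐ t ∂volume.restrict (Ioi 0), ∀ y ∈ Metric.ball x (x / 2),
      ‖-(t ^ (ν - 1 - 1) * exp (-t - y / t))‖ ≤ t ^ (ν - 1 - 1) * exp (-t - x / 2 / t) := by
    refine (ae_restrict_iff' measurableSet_Ioi).2 (.of_forall fun t (ht : 0 < t) y hy => ?_)
    have hy : x / 2 ≤ y := by linarith [(abs_lt.1 (mem_ball_iff_norm.1 hy)).1]
    rw [norm_neg, norm_of_nonneg (by positivity)]
    gcongr
  have h := hasDerivAt_integral_of_dominated_loc_of_deriv_le hball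
    (.of_forall fun y => (continuousOn_rpow_mul_exp_neg_sub_div (ν - 1) y).aestronglyMeasurable
      measurableSet_Ioi)
    (integrableOn_rpow_mul_exp_neg_sub_div (ν - 1) hx)
    ((continuousOn_rpow_mul_exp_neg_sub_div (ν - 1 - 1) x).aestronglyMeasurable
      measurableSet_Ioi).neg
    hbound (integrableOn_rpow_mul_exp_neg_sub_div (ν - 1 - 1) (half_pos hx))
    ((ae_restrict_iff' measurableSet_Ioi).2 (.of_forall fun t ht y _ =>
      hasDerivAt_rpow_mul_exp_neg_sub_div ht (ν - 1) y))
  rw [integral_neg] at h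
  exact h.2

theorem integral_comp_div_Ioi {E : Type*} [NormedAddCommGroup E] [NormedSpace ℝ E]
    (g : ℝ → E) {c : ℝ} (hc : 0 < c) :
    ∫ t in Ioi 0, (c / t ^ 2) • g (c / t) = ∫ t in Ioi 0, g t := by
  have h := integral_comp_rpow_Ioi (fun u => g (c * u)) (p := -1) (by norm_num)
  rw [integral_comp_mul_left_Ioi g 0 hc, mul_zero] at h
  rw [← smul_right_inj (inv_ne_zero hc.ne'), ← h, ← integral_smul]
  refine setIntegral_congr_fun measurableSet_Ioi fun t (ht : 0 < t) => ?_
  have : t ^ ((-1 : ℝ) - 1) = (t ^ 2)⁻¹ := by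
    rw [show (-1 : ℝ) - 1 = -(2 : ℕ) by norm_num, rpow_neg ht.le, rpow_natCast]
  simp only [smul_smul, this, rpow_neg_one, abs_neg, abs_one, one_mul, div_eq_mul_inv]
  field_simp

theorem rho_eq_rpow_mul_rho_neg (ν : ℝ) {x : ℝ} (hx : 0 < x) :
    rho ν x = x ^ ν * rho (-ν) x := by
  rw [rho, ← integral_comp_div_Ioi _ hx, rho, ← integral_const_mul]
  refine setIntegral_congr_fun measurableSet_Ioi fun t (ht : 0 < t) => ?_
  have hxt : x / (x / t) = t := by field_simp
  rw [smul_eq_mul, hxt, div_rpow hx.le ht.le, rpow_sub_one hx.ne', rpow_sub_one ht.ne',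
    rpow_sub_one ht.ne', rpow_neg ht.le, neg_sub_comm]
  field_simp

theorem rho_deriv (ν x : ℝ) (hx : 0 < x) :
    HasDerivAt (fun y => rho ν y) (ν / x * rho ν x - 1 / x * rho (ν + 1) x) x := by
  have hfun : rho ν =ᶠ[nhds x] fun y => y ^ ν * rho (-ν) y :=
    Filter.eventually_of_mem (Ioi_mem_nhds hx) fun y hy => rho_eq_rpow_mul_rho_neg ν hy
  have hprod := (hasDerivAt_rpow_const (p := ν) (Or.inl hx.ne')).mul (hasDerivAt_rho (-ν) hx)
  refine (hprod.congr_of_eventuallyEq hfun).congr_deriv ?_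
  rw [rho_eq_rpow_mul_rho_neg ν hx, rho_eq_rpow_mul_rho_neg (ν + 1) hx, neg_add',
    rpow_add_one hx.ne', rpow_sub_one hx.ne']
  field_simp
  ring
end

section
/- Let ν ≥ 0, α > -1. With p_{n+1,n}^α(x) = Σ_k a_{n+1,n}^α(k) x^(2n+1-k) the monic type-2 multiple orthogonal polynomial, the subleading coefficient is a_{n+1,n}^α(1) = -(2n+1)(α+2n+1)(α+2n+ν+1). -/
/-!
Expanding `P` in monomials, the moments `∫ x^s ρ_ν = Γ(s+1) Γ(s+ν+1)` turn each orthogonality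
condition into `L Q = 0` for the functional `L f = ∑ⱼ P_j Γ(j+α+1) Γ(j+α+ν+1) f(j)` and
`Q(x) = (x+α+1)_k (x+α+ν+1)_k'` with `k' ∈ {k, k+1}`. These `Q` are monic of every degree
`0, …, 2n`, so `L` vanishes on all polynomials of degree `≤ 2n`, in particular on
`x(x-1)⋯(x-2n+1)`, which vanishes at every `j < 2n`. Only `j = 2n, 2n+1` survive, leaving
`(2n)! Γ(2n+α+1) Γ(2n+α+ν+1) (P_{2n} + (2n+1)(2n+α+1)(2n+α+ν+1)) = 0`.
-/

open MeasureTheory Real Set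

/-- `p` is the monic type-2 multiple orthogonal polynomial of multi-index `(n,m)`
for the weights `x^α ρ_ν` and `x^α ρ_{ν+1}` on `(0,∞)`. -/
def IsType2MOP (ν α : ℝ) (n m : ℕ) (p : Polynomial ℝ) : Prop :=
  p.Monic ∧ p.natDegree = n + m ∧
  (∀ k : ℕ, k < n → ∫ x in Set.Ioi (0:ℝ), p.eval x * x ^ ((k : ℝ) + α) * rho ν x = 0) ∧
  (∀ k : ℕ, k < m → ∫ x in Set.Ioi (0:ℝ), p.eval x * x ^ ((k : ℝ) + α) * rho (ν + 1) x = 0)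

lemma lintegral_rpow_mul_exp_neg_mul {s b : ℝ} (hs : -1 < s) (hb : 0 < b) :
    ∫⁻ x in Ioi 0, ENNReal.ofReal (x ^ s * exp (-(b * x)))
      = ENNReal.ofReal ((1 / b) ^ (s + 1) * Gamma (s + 1)) := by
  have hint : IntegrableOn (fun x : ℝ => x ^ s * exp (-(b * x))) (Ioi 0) := by
    simpa using integrableOn_rpow_mul_exp_neg_mul_rpow (p := 1) hs one_pos hb
  have hnonneg : 0 ≤ᵐ[volume.restrict (Ioi 0)] fun x : ℝ => x ^ s * exp (-(b * x)) := by
    filter_upwards [ae_restrict_mem measurableSet_Ioi] with x (hx : 0 < x)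
    positivity
  rw [← ofReal_integral_eq_lintegral_ofReal hint hnonneg,
    ← integral_rpow_mul_exp_neg_mul_Ioi (by linarith) hb, add_sub_cancel_right]

lemma integrableOn_rho_integrand {ν x : ℝ} (hν : 0 ≤ ν) (hx : 0 < x) :
    IntegrableOn (fun t : ℝ => t ^ (ν - 1) * exp (-t - x / t)) (Ioi 0) := by
  have hexp_decay : IntegrableOn (fun t : ℝ => t ^ ν * exp (-(1 * t))) (Ioi 0) := by
    simpa using integrableOn_rpow_mul_exp_neg_mul_rpow (p := 1) (by linarith) one_pos one_pos
  have hbound : IntegrableOn (fun t : ℝ => x⁻¹ * (t ^ ν * exp (-(1 * t)))) (Ioi 0) :=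
    hexp_decay.const_mul _
  refine hbound.mono' (by fun_prop) ?_
  filter_upwards [ae_restrict_mem measurableSet_Ioi] with t (ht : 0 < t)
  -- `e^{-x/t} ≤ t/x` trades the singularity of `t^(ν-1)` at `0` for a factor `t`
  have hexp : exp (-(x / t)) ≤ t / x := by
    rw [exp_neg, ← inv_div x t]
    exact inv_anti₀ (div_pos hx ht) ((le_add_of_nonneg_right zero_le_one).trans
      (add_one_le_exp _))
  rw [norm_of_nonneg (by positivity), show -t - x / t = -t + -(x / t) by ring, exp_add]
  calc t ^ (ν - 1) * (exp (-t) * exp (-(x / t)))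
      ≤ t ^ (ν - 1) * (exp (-t) * (t / x)) := by gcongr
    _ = x⁻¹ * (t ^ (ν - 1) * t * exp (-(1 * t))) := by ring_nf
    _ = x⁻¹ * (t ^ ν * exp (-(1 * t))) := by
      rw [← rpow_add_one ht.ne', sub_add_cancel]

lemma rho_nonneg (ν x : ℝ) : 0 ≤ rho ν x :=
  setIntegral_nonneg measurableSet_Ioi fun t (ht : 0 < t) => by positivity

lemma stronglyMeasurable_rho (ν : ℝ) : StronglyMeasurable (rho ν) :=
  (show Measurable fun p : ℝ × ℝ => p.2 ^ (ν - 1) * exp (-p.2 - p.1 / p.2) by fun_prop)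
    |>.stronglyMeasurable.integral_prod_right'

lemma ofReal_rho {ν x : ℝ} (hν : 0 ≤ ν) (hx : 0 < x) :
    ENNReal.ofReal (rho ν x)
      = ∫⁻ t in Ioi 0, ENNReal.ofReal (t ^ (ν - 1) * exp (-t - x / t)) :=
  ofReal_integral_eq_lintegral_ofReal (integrableOn_rho_integrand hν hx) <| by
    filter_upwards [ae_restrict_mem measurableSet_Ioi] with t (ht : 0 < t)
    positivity

lemma lintegral_rpow_mul_rho {ν s : ℝ} (hν : 0 ≤ ν) (hs : -1 < s) :
    ∫⁻ x in Ioi 0, ENNReal.ofReal (x ^ s * rho ν x)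
      = ENNReal.ofReal (Gamma (s + 1) * Gamma (s + ν + 1)) := by
  have hinner : ∀ t ∈ Ioi (0 : ℝ),
      ∫⁻ x in Ioi 0, ENNReal.ofReal (x ^ s * (t ^ (ν - 1) * exp (-t - x / t)))
        = ENNReal.ofReal (Gamma (s + 1)) * ENNReal.ofReal (t ^ (s + ν) * exp (-(1 * t))) := by
    intro t (ht : 0 < t)
    calc ∫⁻ x in Ioi 0, ENNReal.ofReal (x ^ s * (t ^ (ν - 1) * exp (-t - x / t)))
        = ∫⁻ x in Ioi 0, ENNReal.ofReal (t ^ (ν - 1) * exp (-t))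
            * ENNReal.ofReal (x ^ s * exp (-(t⁻¹ * x))) := by
          refine setLIntegral_congr_fun measurableSet_Ioi fun x (hx : 0 < x) => ?_
          rw [← ENNReal.ofReal_mul (by positivity), show -t - x / t = -t + -(t⁻¹ * x) by ring,
            exp_add]
          ring_nf
      _ = ENNReal.ofReal (t ^ (ν - 1) * exp (-t))
            * ENNReal.ofReal ((1 / t⁻¹) ^ (s + 1) * Gamma (s + 1)) := by
          rw [lintegral_const_mul _ (by fun_prop),
            lintegral_rpow_mul_exp_neg_mul hs (inv_pos.2 ht)]
      _ = _ := by
          rw [← ENNReal.ofReal_mul (by positivity),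
            ← ENNReal.ofReal_mul (Gamma_pos_of_pos (by linarith)).le, one_div, inv_inv,
            show s + ν = ν - 1 + (s + 1) by ring, rpow_add ht (ν - 1)]
          ring_nf
  calc ∫⁻ x in Ioi 0, ENNReal.ofReal (x ^ s * rho ν x)
      = ∫⁻ x in Ioi 0, ∫⁻ t in Ioi 0,
          ENNReal.ofReal (x ^ s * (t ^ (ν - 1) * exp (-t - x / t))) := by
        refine setLIntegral_congr_fun measurableSet_Ioi fun x (hx : 0 < x) => ?_
        rw [ENNReal.ofReal_mul (by positivity), ofReal_rho hν hx,
          ← lintegral_const_mul _ (by fun_prop)]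
        simp_rw [← ENNReal.ofReal_mul (rpow_nonneg hx.le s)]
    _ = ∫⁻ t in Ioi 0, ∫⁻ x in Ioi 0,
          ENNReal.ofReal (x ^ s * (t ^ (ν - 1) * exp (-t - x / t))) :=
        lintegral_lintegral_swap (by fun_prop)
    _ = ∫⁻ t in Ioi 0, ENNReal.ofReal (Gamma (s + 1))
          * ENNReal.ofReal (t ^ (s + ν) * exp (-(1 * t))) :=
        setLIntegral_congr_fun measurableSet_Ioi hinner
    _ = _ := by
        rw [lintegral_const_mul _ (by fun_prop),
          lintegral_rpow_mul_exp_neg_mul (by linarith) one_pos, ← ENNReal.ofReal_mul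
          (Gamma_pos_of_pos (by linarith)).le, div_one, one_rpow, one_mul]

lemma integrableOn_rpow_mul_rho {ν s : ℝ} (hν : 0 ≤ ν) (hs : -1 < s) :
    IntegrableOn (fun x : ℝ => x ^ s * rho ν x) (Ioi 0) := by
  refine ⟨(by fun_prop : Measurable fun x : ℝ => x ^ s).aestronglyMeasurable.mul
    (stronglyMeasurable_rho ν).aestronglyMeasurable, ?_⟩
  rw [hasFiniteIntegral_iff_ofReal, lintegral_rpow_mul_rho hν hs]
  · exact ENNReal.ofReal_lt_top
  · filter_upwards [ae_restrict_mem measurableSet_Ioi] with x (hx : 0 < x)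
    exact mul_nonneg (by positivity) (rho_nonneg ν x)

lemma integral_rpow_mul_rho {ν s : ℝ} (hν : 0 ≤ ν) (hs : -1 < s) :
    ∫ x in Ioi 0, x ^ s * rho ν x = Gamma (s + 1) * Gamma (s + ν + 1) := by
  have hpos : 0 < Gamma (s + 1) * Gamma (s + ν + 1) :=
    mul_pos (Gamma_pos_of_pos (by linarith)) (Gamma_pos_of_pos (by linarith))
  rw [integral_eq_lintegral_of_nonneg_ae, lintegral_rpow_mul_rho hν hs,
    ENNReal.toReal_ofReal hpos.le]
  · filter_upwards [ae_restrict_mem measurableSet_Ioi] with x (hx : 0 < x)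
    exact mul_nonneg (by positivity) (rho_nonneg ν x)
  · exact (integrableOn_rpow_mul_rho hν hs).aestronglyMeasurable

open Polynomial

lemma integral_eval_mul_rpow_mul_rho {ν s : ℝ} (hν : 0 ≤ ν) (hs : -1 < s) (P : ℝ[X]) :
    ∫ x in Ioi 0, P.eval x * x ^ s * rho ν x
      = ∑ j ∈ Finset.range (P.natDegree + 1),
          P.coeff j * (Gamma (j + s + 1) * Gamma (j + s + ν + 1)) := by
  have hexpand : ∀ x ∈ Ioi (0 : ℝ), P.eval x * x ^ s * rho ν x
      = ∑ j ∈ Finset.range (P.natDegree + 1), P.coeff j * (x ^ ((j : ℝ) + s) * rho ν x) := by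
    intro x (hx : 0 < x)
    simp_rw [eval_eq_sum_range, Finset.sum_mul, rpow_add hx, rpow_natCast, mul_assoc]
  have hs' : ∀ j : ℕ, -1 < (j : ℝ) + s := fun j => by
    linarith [(Nat.cast_nonneg j : (0 : ℝ) ≤ j)]
  rw [setIntegral_congr_fun measurableSet_Ioi hexpand,
    integral_finsetSum _ fun j _ => (integrableOn_rpow_mul_rho hν (hs' j)).const_mul _]
  refine Finset.sum_congr rfl fun j _ => ?_
  rw [integral_const_mul, integral_rpow_mul_rho hν (hs' j)]

lemma Gamma_add_nat_eq_mul_ascPochhammer {x : ℝ} (hx : ∀ m : ℕ, x ≠ -m) (k : ℕ) :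
    Gamma (x + k) = Gamma x * (ascPochhammer ℝ k).eval x := by
  induction k with
  | zero => simp
  | succ k ih =>
    have hxk : x + k ≠ 0 := fun h => hx k (by linarith)
    rw [Nat.cast_succ, ← add_assoc, Gamma_add_one hxk, ih, ascPochhammer_succ_eval]
    ring

noncomputable def gammaShiftPoly (β γ : ℝ) (a b : ℕ) : ℝ[X] :=
  (ascPochhammer ℝ a).comp (X + C β) * (ascPochhammer ℝ b).comp (X + C γ)

lemma monic_gammaShiftPoly (β γ : ℝ) (a b : ℕ) : (gammaShiftPoly β γ a b).Monic :=
  ((monic_ascPochhammer ℝ a).comp_X_add_C β).mul ((monic_ascPochhammer ℝ b).comp_X_add_C γ)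

lemma natDegree_gammaShiftPoly (β γ : ℝ) (a b : ℕ) :
    (gammaShiftPoly β γ a b).natDegree = a + b := by
  rw [gammaShiftPoly, ((monic_ascPochhammer ℝ a).comp_X_add_C β).natDegree_mul
    ((monic_ascPochhammer ℝ b).comp_X_add_C γ), natDegree_comp, natDegree_comp,
    ascPochhammer_natDegree, ascPochhammer_natDegree, natDegree_X_add_C, natDegree_X_add_C,
    mul_one, mul_one]

lemma Gamma_mul_Gamma_add_nat {x β γ : ℝ} (hβ : ∀ m : ℕ, x + β ≠ -m)
    (hγ : ∀ m : ℕ, x + γ ≠ -m) (a b : ℕ) :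
    Gamma (x + β + a) * Gamma (x + γ + b)
      = Gamma (x + β) * Gamma (x + γ) * (gammaShiftPoly β γ a b).eval x := by
  rw [Gamma_add_nat_eq_mul_ascPochhammer hβ, Gamma_add_nat_eq_mul_ascPochhammer hγ,
    gammaShiftPoly, eval_mul, eval_comp, eval_comp]
  simp only [eval_add, eval_X, eval_C]
  ring

noncomputable def momentFunctional (ν α : ℝ) (P : ℝ[X]) : ℝ[X] →ₗ[ℝ] ℝ :=
  ∑ j ∈ Finset.range (P.natDegree + 1),
    (P.coeff j * (Gamma (j + α + 1) * Gamma (j + α + ν + 1))) • leval (j : ℝ)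

lemma momentFunctional_apply (ν α : ℝ) (P f : ℝ[X]) :
    momentFunctional ν α P f = ∑ j ∈ Finset.range (P.natDegree + 1),
      P.coeff j * (Gamma (j + α + 1) * Gamma (j + α + ν + 1)) * f.eval (j : ℝ) := by
  simp [momentFunctional]

lemma integral_eval_mul_rpow_mul_rho_add_nat {ν α : ℝ} (hν : 0 ≤ ν) (hα : -1 < α)
    (P : ℝ[X]) (k m : ℕ) :
    ∫ x in Ioi 0, P.eval x * x ^ ((k : ℝ) + α) * rho (ν + m) x
      = momentFunctional ν α P (gammaShiftPoly (α + 1) (α + ν + 1) k (k + m)) := by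
  rw [integral_eval_mul_rpow_mul_rho (by positivity)
    (by linarith [(Nat.cast_nonneg k : (0 : ℝ) ≤ k)]), momentFunctional_apply]
  refine Finset.sum_congr rfl fun j _ => ?_
  have hj : (0 : ℝ) ≤ j := Nat.cast_nonneg j
  have hpole : ∀ c : ℝ, 0 < c → ∀ m' : ℕ, (j : ℝ) + c ≠ -m' := fun c hc m' h => by
    linarith [(Nat.cast_nonneg m' : (0 : ℝ) ≤ m')]
  rw [show (j : ℝ) + (k + α) + 1 = j + (α + 1) + k by ring,
    show (j : ℝ) + (k + α) + (ν + m) + 1 = j + (α + ν + 1) + ((k + m : ℕ) : ℝ) by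
      push_cast; ring,
    Gamma_mul_Gamma_add_nat (hpole _ (by linarith)) (hpole _ (by linarith)),
    ← add_assoc, ← add_assoc, ← add_assoc, mul_assoc (P.coeff j)]

lemma IsType2MOP.momentFunctional_eq_zero {ν α : ℝ} {n m : ℕ} {P : ℝ[X]}
    (hP : IsType2MOP ν α n m P) (hν : 0 ≤ ν) (hα : -1 < α) (hmn : m ≤ n)
    (hnm : n ≤ m + 1) {d : ℕ} (hd : d < n + m) :
    momentFunctional ν α P (gammaShiftPoly (α + 1) (α + ν + 1) (d / 2) (d - d / 2)) = 0 := by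
  obtain ⟨k, rfl | rfl⟩ := Nat.even_or_odd' d
  · rw [show 2 * k / 2 = k by omega, show 2 * k - k = k + 0 by omega,
      ← integral_eval_mul_rpow_mul_rho_add_nat hν hα]
    simpa using hP.2.2.1 k (by omega)
  · rw [show (2 * k + 1) / 2 = k by omega, show 2 * k + 1 - k = k + 1 by omega,
      ← integral_eval_mul_rpow_mul_rho_add_nat hν hα]
    simpa using hP.2.2.2 k (by omega)

lemma LinearMap.map_eq_zero_of_degree_lt {R M : Type*} [CommRing R] [AddCommGroup M]
    [Module R M] (L : R[X] →ₗ[R] M) (q : ℕ → R[X]) (hq : ∀ d, (q d).Monic)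
    (hdeg : ∀ d, (q d).natDegree = d) {N : ℕ} (hL : ∀ d < N, L (q d) = 0) {p : R[X]}
    (hp : p.degree < N) : L p = 0 := by
  induction N generalizing p with
  | zero =>
    rw [Nat.cast_zero, Nat.WithBot.lt_zero_iff, degree_eq_bot] at hp
    rw [hp, map_zero]
  | succ N ih =>
    set p' := p - C (p.coeff N) * q N
    have hp' : p'.degree < N := by
      rw [degree_lt_iff_coeff_zero]
      intro i hi
      rcases hi.eq_or_lt with rfl | hi
      · have hlead := (hq N).coeff_natDegree
        rw [hdeg] at hlead
        rw [coeff_sub, coeff_C_mul, hlead, mul_one, sub_self]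
      · have hpi : p.coeff i = 0 := (degree_lt_iff_coeff_zero p (N + 1)).1 hp i hi
        have hqi : (q N).coeff i = 0 := coeff_eq_zero_of_natDegree_lt (by rwa [hdeg])
        rw [coeff_sub, coeff_C_mul, hpi, hqi, mul_zero, sub_zero]
    have hsplit : p = p' + p.coeff N • q N := by rw [smul_eq_C_mul]; ring
    rw [hsplit, map_add, map_smul, ih (fun d hd => hL d (by omega)) hp', hL N (by omega),
      smul_zero, add_zero]

lemma momentFunctional_descPochhammer {ν α : ℝ} {P : ℝ[X]} {N : ℕ}
    (hP : P.natDegree = N + 1) (hα : (N : ℝ) + α + 1 ≠ 0) (hαν : (N : ℝ) + α + ν + 1 ≠ 0) :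
    momentFunctional ν α P (descPochhammer ℝ N)
      = N.factorial * (Gamma (N + α + 1) * Gamma (N + α + ν + 1))
        * (P.coeff N + (N + 1) * (N + α + 1) * (N + α + ν + 1) * P.coeff (N + 1)) := by
  have hfac : ((N + 1).descFactorial N : ℝ) = (N + 1) * N.factorial := by
    have := Nat.succ_descFactorial N N
    rw [Nat.add_sub_cancel_left, one_mul, Nat.descFactorial_self] at this
    exact_mod_cast this
  rw [momentFunctional_apply, hP, Finset.sum_range_succ, Finset.sum_range_succ,
    Finset.sum_eq_zero fun j hj => ?_]
  · simp only [descPochhammer_eval_eq_descFactorial, Nat.descFactorial_self, hfac]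
    rw [Nat.cast_add_one, show (N : ℝ) + 1 + α + 1 = N + α + 1 + 1 by ring,
      show (N : ℝ) + 1 + α + ν + 1 = N + α + ν + 1 + 1 by ring, Gamma_add_one hα,
      Gamma_add_one hαν]
    ring
  · rw [descPochhammer_eval_eq_descFactorial,
      Nat.descFactorial_eq_zero_iff_lt.2 (Finset.mem_range.1 hj), Nat.cast_zero, mul_zero]

theorem type2_np1n_subleading_coeff (ν α : ℝ) (hν : 0 ≤ ν) (hα : -1 < α) (n : ℕ)
    (P : Polynomial ℝ) (hP : IsType2MOP ν α (n + 1) n P) :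
    P.coeff (2 * n) = -(2 * n + 1) * (α + 2 * n + 1) * (α + 2 * n + ν + 1) := by
  have hdeg : P.natDegree = 2 * n + 1 := by rw [hP.2.1]; ring
  have hlead : P.coeff (2 * n + 1) = 1 := hdeg ▸ hP.1.coeff_natDegree
  have hzero : momentFunctional ν α P (descPochhammer ℝ (2 * n)) = 0 :=
    LinearMap.map_eq_zero_of_degree_lt _ _
      (fun d => monic_gammaShiftPoly (α + 1) (α + ν + 1) (d / 2) (d - d / 2))
      (fun d => by rw [natDegree_gammaShiftPoly]; omega)
      (fun d hd => hP.momentFunctional_eq_zero hν hα (by omega) le_rfl (by omega))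
      (by rw [degree_eq_natDegree (monic_descPochhammer ℝ _).ne_zero, descPochhammer_natDegree]
          exact_mod_cast (by omega : 2 * n < n + 1 + n))
  have hn : (0 : ℝ) ≤ ↑(2 * n) := Nat.cast_nonneg _
  have hα₁ : 0 < (↑(2 * n) : ℝ) + α + 1 := by linarith
  have hαν₁ : 0 < (↑(2 * n) : ℝ) + α + ν + 1 := by linarith
  have hweight : 0 < ((2 * n).factorial : ℝ)
      * (Gamma (↑(2 * n) + α + 1) * Gamma (↑(2 * n) + α + ν + 1)) := by
    have := Gamma_pos_of_pos hα₁
    have := Gamma_pos_of_pos hαν₁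
    positivity
  rw [momentFunctional_descPochhammer hdeg hα₁.ne' hαν₁.ne', hlead] at hzero
  have hcoeff := (mul_eq_zero.1 hzero).resolve_left hweight.ne'
  push_cast at hcoeff
  linear_combination hcoeff
end
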